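/- A linear endomorphism D of 𝔥₄ is a derivation (i.e. D[x,y] = [Dx,y] + [x,Dy] for all x,y) if and only if its matrix (d_{ij}) in the basis e₁,…,e₆ satisfies: d_{1j} = d_{2j} = 0 for j = 3,4,5,6; d_{35} = d_{36} = d_{45} = d_{46} = 0; d_{56} = 0; d_{34} = -d_{12}; d_{43} = -d_{21}; d_{44} - d_{33} = d_{22} - d_{11}; d_{55} = d_{11} + d_{22}; d_{65} = d_{42} - d_{31}; and d_{66} = d_{22} + d_{33}. In particular, the real vector space of derivations of 𝔥₄ has dimension 17. -/
import Mathlib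


open Matrix

/-- The Lie bracket of the nilpotent Lie algebra 𝔥₄ = (0,0,0,0,12,14+23) in the basis
e₁,…,e₆: the only nonzero brackets among basis vectors are [e₁,e₂] = -e₅ and
[e₁,e₄] = [e₂,e₃] = -e₆. -/
def h4bracket (x y : Fin 6 → ℝ) : Fin 6 → ℝ :=
  ![0, 0, 0, 0, -(x 0 * y 1 - x 1 * y 0),
    -((x 0 * y 3 - x 3 * y 0) + (x 1 * y 2 - x 2 * y 1))]

/-- A derivation of 𝔥₄, identified with its matrix (d_{ij}) in the basis e₁,…,e₆. -/
def IsDerivH4 (D : Matrix (Fin 6) (Fin 6) ℝ) : Prop :=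
  ∀ x y : Fin 6 → ℝ,
    D.mulVec (h4bracket x y) = h4bracket (D.mulVec x) y + h4bracket x (D.mulVec y)

@[simp] lemma vec6_0 {α : Type*} (a b c d e f : α) : ![a,b,c,d,e,f] 0 = a := rfl
@[simp] lemma vec6_1 {α : Type*} (a b c d e f : α) : ![a,b,c,d,e,f] 1 = b := rfl
@[simp] lemma vec6_2 {α : Type*} (a b c d e f : α) : ![a,b,c,d,e,f] 2 = c := rfl
@[simp] lemma vec6_3 {α : Type*} (a b c d e f : α) : ![a,b,c,d,e,f] 3 = d := rfl
@[simp] lemma vec6_4 {α : Type*} (a b c d e f : α) : ![a,b,c,d,e,f] 4 = e := rfl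
@[simp] lemma vec6_5 {α : Type*} (a b c d e f : α) : ![a,b,c,d,e,f] 5 = f := rfl

lemma h4bracket_add_left (x x' y : Fin 6 → ℝ) :
    h4bracket (x + x') y = h4bracket x y + h4bracket x' y := by
  funext i; fin_cases i <;> simp [h4bracket] <;> ring

lemma h4bracket_add_right (x y y' : Fin 6 → ℝ) :
    h4bracket x (y + y') = h4bracket x y + h4bracket x y' := by
  funext i; fin_cases i <;> simp [h4bracket] <;> ring

lemma h4bracket_smul_left (c : ℝ) (x y : Fin 6 → ℝ) :
    h4bracket (c • x) y = c • h4bracket x y := by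
  funext i; fin_cases i <;> simp [h4bracket] <;> ring

lemma h4bracket_smul_right (c : ℝ) (x y : Fin 6 → ℝ) :
    h4bracket x (c • y) = c • h4bracket x y := by
  funext i; fin_cases i <;> simp [h4bracket] <;> ring

lemma isDerivH4_zero : IsDerivH4 0 := by
  intro x y
  funext i; fin_cases i <;> simp [h4bracket, Matrix.zero_mulVec]

lemma isDerivH4_add {A B : Matrix (Fin 6) (Fin 6) ℝ} (hA : IsDerivH4 A) (hB : IsDerivH4 B) :
    IsDerivH4 (A + B) := by
  intro x y
  rw [Matrix.add_mulVec, hA x y, hB x y, Matrix.add_mulVec, Matrix.add_mulVec,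
    h4bracket_add_left, h4bracket_add_right]
  abel

lemma isDerivH4_smul (c : ℝ) {A : Matrix (Fin 6) (Fin 6) ℝ} (hA : IsDerivH4 A) :
    IsDerivH4 (c • A) := by
  intro x y
  rw [Matrix.smul_mulVec, hA x y, Matrix.smul_mulVec, Matrix.smul_mulVec,
    h4bracket_smul_left, h4bracket_smul_right, smul_add]

/-- The linear conditions, as a single predicate. -/
def H4Cond (D : Matrix (Fin 6) (Fin 6) ℝ) : Prop :=
  D 0 2 = 0 ∧ D 0 3 = 0 ∧ D 0 4 = 0 ∧ D 0 5 = 0 ∧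
  D 1 2 = 0 ∧ D 1 3 = 0 ∧ D 1 4 = 0 ∧ D 1 5 = 0 ∧
  D 2 4 = 0 ∧ D 2 5 = 0 ∧ D 3 4 = 0 ∧ D 3 5 = 0 ∧ D 4 5 = 0 ∧
  D 2 3 = -(D 0 1) ∧ D 3 2 = -(D 1 0) ∧
  D 3 3 - D 2 2 = D 1 1 - D 0 0 ∧ D 4 4 = D 0 0 + D 1 1 ∧
  D 5 4 = D 3 1 - D 2 0 ∧ D 5 5 = D 1 1 + D 2 2

lemma cond_imp_deriv {D : Matrix (Fin 6) (Fin 6) ℝ} (h : H4Cond D) : IsDerivH4 D := by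
  obtain ⟨h02, h03, h04, h05, h12, h13, h14, h15, h24, h25, h34, h35, h45, h23, h32, h33, h44, h54, h55⟩ := h
  have h33' : D 3 3 = D 1 1 - D 0 0 + D 2 2 := by linarith
  intro x y
  funext i
  fin_cases i <;>
    simp [h4bracket, mulVec, dotProduct, Fin.sum_univ_six, h02, h03, h04, h05, h12, h13,
      h14, h15, h24, h25, h34, h35, h45, h23, h32, h33', h44, h54, h55] <;> ring

lemma deriv_imp_cond {D : Matrix (Fin 6) (Fin 6) ℝ} (hD : IsDerivH4 D) : H4Cond D := by
  have h01 := hD ![1,0,0,0,0,0] ![0,1,0,0,0,0]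
  have h02 := hD ![1,0,0,0,0,0] ![0,0,1,0,0,0]
  have h03 := hD ![1,0,0,0,0,0] ![0,0,0,1,0,0]
  have h12 := hD ![0,1,0,0,0,0] ![0,0,1,0,0,0]
  have h13 := hD ![0,1,0,0,0,0] ![0,0,0,1,0,0]
  have h23 := hD ![0,0,1,0,0,0] ![0,0,0,1,0,0]
  have e01_0 := congrFun h01 0; have e01_1 := congrFun h01 1
  have e01_2 := congrFun h01 2; have e01_3 := congrFun h01 3
  have e01_4 := congrFun h01 4; have e01_5 := congrFun h01 5
  have e03_0 := congrFun h03 0; have e03_1 := congrFun h03 1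
  have e03_2 := congrFun h03 2; have e03_3 := congrFun h03 3
  have e03_4 := congrFun h03 4; have e03_5 := congrFun h03 5
  have e02_4 := congrFun h02 4; have e02_5 := congrFun h02 5
  have e12_4 := congrFun h12 4; have e12_5 := congrFun h12 5
  have e13_4 := congrFun h13 4; have e13_5 := congrFun h13 5
  have e23_5 := congrFun h23 5
  clear h01 h02 h03 h12 h13 h23
  simp [h4bracket, mulVec, dotProduct, Fin.sum_univ_six] at e01_0 e01_1 e01_2 e01_3 e01_4 e01_5 e03_0 e03_1 e03_2 e03_3 e03_4 e03_5 e02_4 e02_5 e12_4 e12_5 e13_4 e13_5 e23_5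
  refine ⟨?_,?_,?_,?_,?_,?_,?_,?_,?_,?_,?_,?_,?_,?_,?_,?_,?_,?_,?_⟩ <;> linarith

def B0 : Matrix (Fin 6) (Fin 6) ℝ :=
  !![1, 0, 0, 0, 0, 0;
      0, 0, 0, 0, 0, 0;
      0, 0, 0, 0, 0, 0;
      0, 0, 0, -1, 0, 0;
      0, 0, 0, 0, 1, 0;
      0, 0, 0, 0, 0, 0]

def B1 : Matrix (Fin 6) (Fin 6) ℝ :=
  !![0, 1, 0, 0, 0, 0;
      0, 0, 0, 0, 0, 0;
      0, 0, 0, -1, 0, 0;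
      0, 0, 0, 0, 0, 0;
      0, 0, 0, 0, 0, 0;
      0, 0, 0, 0, 0, 0]

def B2 : Matrix (Fin 6) (Fin 6) ℝ :=
  !![0, 0, 0, 0, 0, 0;
      1, 0, 0, 0, 0, 0;
      0, 0, 0, 0, 0, 0;
      0, 0, -1, 0, 0, 0;
      0, 0, 0, 0, 0, 0;
      0, 0, 0, 0, 0, 0]

def B3 : Matrix (Fin 6) (Fin 6) ℝ :=
  !![0, 0, 0, 0, 0, 0;
      0, 1, 0, 0, 0, 0;
      0, 0, 0, 0, 0, 0;
      0, 0, 0, 1, 0, 0;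
      0, 0, 0, 0, 1, 0;
      0, 0, 0, 0, 0, 1]

def B4 : Matrix (Fin 6) (Fin 6) ℝ :=
  !![0, 0, 0, 0, 0, 0;
      0, 0, 0, 0, 0, 0;
      1, 0, 0, 0, 0, 0;
      0, 0, 0, 0, 0, 0;
      0, 0, 0, 0, 0, 0;
      0, 0, 0, 0, -1, 0]

def B5 : Matrix (Fin 6) (Fin 6) ℝ :=
  !![0, 0, 0, 0, 0, 0;
      0, 0, 0, 0, 0, 0;
      0, 1, 0, 0, 0, 0;
      0, 0, 0, 0, 0, 0;
      0, 0, 0, 0, 0, 0;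
      0, 0, 0, 0, 0, 0]

def B6 : Matrix (Fin 6) (Fin 6) ℝ :=
  !![0, 0, 0, 0, 0, 0;
      0, 0, 0, 0, 0, 0;
      0, 0, 1, 0, 0, 0;
      0, 0, 0, 1, 0, 0;
      0, 0, 0, 0, 0, 0;
      0, 0, 0, 0, 0, 1]

def B7 : Matrix (Fin 6) (Fin 6) ℝ :=
  !![0, 0, 0, 0, 0, 0;
      0, 0, 0, 0, 0, 0;
      0, 0, 0, 0, 0, 0;
      1, 0, 0, 0, 0, 0;
      0, 0, 0, 0, 0, 0;
      0, 0, 0, 0, 0, 0]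

def B8 : Matrix (Fin 6) (Fin 6) ℝ :=
  !![0, 0, 0, 0, 0, 0;
      0, 0, 0, 0, 0, 0;
      0, 0, 0, 0, 0, 0;
      0, 1, 0, 0, 0, 0;
      0, 0, 0, 0, 0, 0;
      0, 0, 0, 0, 1, 0]

def B9 : Matrix (Fin 6) (Fin 6) ℝ :=
  !![0, 0, 0, 0, 0, 0;
      0, 0, 0, 0, 0, 0;
      0, 0, 0, 0, 0, 0;
      0, 0, 0, 0, 0, 0;
      1, 0, 0, 0, 0, 0;
      0, 0, 0, 0, 0, 0]

def B10 : Matrix (Fin 6) (Fin 6) ℝ :=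
  !![0, 0, 0, 0, 0, 0;
      0, 0, 0, 0, 0, 0;
      0, 0, 0, 0, 0, 0;
      0, 0, 0, 0, 0, 0;
      0, 1, 0, 0, 0, 0;
      0, 0, 0, 0, 0, 0]

def B11 : Matrix (Fin 6) (Fin 6) ℝ :=
  !![0, 0, 0, 0, 0, 0;
      0, 0, 0, 0, 0, 0;
      0, 0, 0, 0, 0, 0;
      0, 0, 0, 0, 0, 0;
      0, 0, 1, 0, 0, 0;
      0, 0, 0, 0, 0, 0]

def B12 : Matrix (Fin 6) (Fin 6) ℝ :=
  !![0, 0, 0, 0, 0, 0;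
      0, 0, 0, 0, 0, 0;
      0, 0, 0, 0, 0, 0;
      0, 0, 0, 0, 0, 0;
      0, 0, 0, 1, 0, 0;
      0, 0, 0, 0, 0, 0]

def B13 : Matrix (Fin 6) (Fin 6) ℝ :=
  !![0, 0, 0, 0, 0, 0;
      0, 0, 0, 0, 0, 0;
      0, 0, 0, 0, 0, 0;
      0, 0, 0, 0, 0, 0;
      0, 0, 0, 0, 0, 0;
      1, 0, 0, 0, 0, 0]

def B14 : Matrix (Fin 6) (Fin 6) ℝ :=
  !![0, 0, 0, 0, 0, 0;
      0, 0, 0, 0, 0, 0;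
      0, 0, 0, 0, 0, 0;
      0, 0, 0, 0, 0, 0;
      0, 0, 0, 0, 0, 0;
      0, 1, 0, 0, 0, 0]

def B15 : Matrix (Fin 6) (Fin 6) ℝ :=
  !![0, 0, 0, 0, 0, 0;
      0, 0, 0, 0, 0, 0;
      0, 0, 0, 0, 0, 0;
      0, 0, 0, 0, 0, 0;
      0, 0, 0, 0, 0, 0;
      0, 0, 1, 0, 0, 0]

def B16 : Matrix (Fin 6) (Fin 6) ℝ :=
  !![0, 0, 0, 0, 0, 0;
      0, 0, 0, 0, 0, 0;
      0, 0, 0, 0, 0, 0;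
      0, 0, 0, 0, 0, 0;
      0, 0, 0, 0, 0, 0;
      0, 0, 0, 1, 0, 0]

def h4basis : Fin 17 → Matrix (Fin 6) (Fin 6) ℝ :=
  ![B0, B1, B2, B3, B4, B5, B6, B7, B8, B9, B10, B11, B12, B13, B14, B15, B16]

lemma vec17_0 {α : Type*} (x0 x1 x2 x3 x4 x5 x6 x7 x8 x9 x10 x11 x12 x13 x14 x15 x16 : α) : ![x0, x1, x2, x3, x4, x5, x6, x7, x8, x9, x10, x11, x12, x13, x14, x15, x16] 0 = x0 := rfl
lemma vec17_1 {α : Type*} (x0 x1 x2 x3 x4 x5 x6 x7 x8 x9 x10 x11 x12 x13 x14 x15 x16 : α) : ![x0, x1, x2, x3, x4, x5, x6, x7, x8, x9, x10, x11, x12, x13, x14, x15, x16] 1 = x1 := rfl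
lemma vec17_2 {α : Type*} (x0 x1 x2 x3 x4 x5 x6 x7 x8 x9 x10 x11 x12 x13 x14 x15 x16 : α) : ![x0, x1, x2, x3, x4, x5, x6, x7, x8, x9, x10, x11, x12, x13, x14, x15, x16] 2 = x2 := rfl
lemma vec17_3 {α : Type*} (x0 x1 x2 x3 x4 x5 x6 x7 x8 x9 x10 x11 x12 x13 x14 x15 x16 : α) : ![x0, x1, x2, x3, x4, x5, x6, x7, x8, x9, x10, x11, x12, x13, x14, x15, x16] 3 = x3 := rfl
lemma vec17_4 {α : Type*} (x0 x1 x2 x3 x4 x5 x6 x7 x8 x9 x10 x11 x12 x13 x14 x15 x16 : α) : ![x0, x1, x2, x3, x4, x5, x6, x7, x8, x9, x10, x11, x12, x13, x14, x15, x16] 4 = x4 := rfl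
lemma vec17_5 {α : Type*} (x0 x1 x2 x3 x4 x5 x6 x7 x8 x9 x10 x11 x12 x13 x14 x15 x16 : α) : ![x0, x1, x2, x3, x4, x5, x6, x7, x8, x9, x10, x11, x12, x13, x14, x15, x16] 5 = x5 := rfl
lemma vec17_6 {α : Type*} (x0 x1 x2 x3 x4 x5 x6 x7 x8 x9 x10 x11 x12 x13 x14 x15 x16 : α) : ![x0, x1, x2, x3, x4, x5, x6, x7, x8, x9, x10, x11, x12, x13, x14, x15, x16] 6 = x6 := rfl
lemma vec17_7 {α : Type*} (x0 x1 x2 x3 x4 x5 x6 x7 x8 x9 x10 x11 x12 x13 x14 x15 x16 : α) : ![x0, x1, x2, x3, x4, x5, x6, x7, x8, x9, x10, x11, x12, x13, x14, x15, x16] 7 = x7 := rfl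
lemma vec17_8 {α : Type*} (x0 x1 x2 x3 x4 x5 x6 x7 x8 x9 x10 x11 x12 x13 x14 x15 x16 : α) : ![x0, x1, x2, x3, x4, x5, x6, x7, x8, x9, x10, x11, x12, x13, x14, x15, x16] 8 = x8 := rfl
lemma vec17_9 {α : Type*} (x0 x1 x2 x3 x4 x5 x6 x7 x8 x9 x10 x11 x12 x13 x14 x15 x16 : α) : ![x0, x1, x2, x3, x4, x5, x6, x7, x8, x9, x10, x11, x12, x13, x14, x15, x16] 9 = x9 := rfl
lemma vec17_10 {α : Type*} (x0 x1 x2 x3 x4 x5 x6 x7 x8 x9 x10 x11 x12 x13 x14 x15 x16 : α) : ![x0, x1, x2, x3, x4, x5, x6, x7, x8, x9, x10, x11, x12, x13, x14, x15, x16] 10 = x10 := rfl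
lemma vec17_11 {α : Type*} (x0 x1 x2 x3 x4 x5 x6 x7 x8 x9 x10 x11 x12 x13 x14 x15 x16 : α) : ![x0, x1, x2, x3, x4, x5, x6, x7, x8, x9, x10, x11, x12, x13, x14, x15, x16] 11 = x11 := rfl
lemma vec17_12 {α : Type*} (x0 x1 x2 x3 x4 x5 x6 x7 x8 x9 x10 x11 x12 x13 x14 x15 x16 : α) : ![x0, x1, x2, x3, x4, x5, x6, x7, x8, x9, x10, x11, x12, x13, x14, x15, x16] 12 = x12 := rfl
lemma vec17_13 {α : Type*} (x0 x1 x2 x3 x4 x5 x6 x7 x8 x9 x10 x11 x12 x13 x14 x15 x16 : α) : ![x0, x1, x2, x3, x4, x5, x6, x7, x8, x9, x10, x11, x12, x13, x14, x15, x16] 13 = x13 := rfl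
lemma vec17_14 {α : Type*} (x0 x1 x2 x3 x4 x5 x6 x7 x8 x9 x10 x11 x12 x13 x14 x15 x16 : α) : ![x0, x1, x2, x3, x4, x5, x6, x7, x8, x9, x10, x11, x12, x13, x14, x15, x16] 14 = x14 := rfl
lemma vec17_15 {α : Type*} (x0 x1 x2 x3 x4 x5 x6 x7 x8 x9 x10 x11 x12 x13 x14 x15 x16 : α) : ![x0, x1, x2, x3, x4, x5, x6, x7, x8, x9, x10, x11, x12, x13, x14, x15, x16] 15 = x15 := rfl
lemma vec17_16 {α : Type*} (x0 x1 x2 x3 x4 x5 x6 x7 x8 x9 x10 x11 x12 x13 x14 x15 x16 : α) : ![x0, x1, x2, x3, x4, x5, x6, x7, x8, x9, x10, x11, x12, x13, x14, x15, x16] 16 = x16 := rfl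

lemma cond_B0 : H4Cond B0 := by
  refine ⟨?_,?_,?_,?_,?_,?_,?_,?_,?_,?_,?_,?_,?_,?_,?_,?_,?_,?_,?_⟩ <;> simp only [B0, Matrix.of_apply, vec6_0, vec6_1, vec6_2, vec6_3, vec6_4, vec6_5] <;> norm_num

lemma cond_B1 : H4Cond B1 := by
  refine ⟨?_,?_,?_,?_,?_,?_,?_,?_,?_,?_,?_,?_,?_,?_,?_,?_,?_,?_,?_⟩ <;> simp only [B1, Matrix.of_apply, vec6_0, vec6_1, vec6_2, vec6_3, vec6_4, vec6_5] <;> norm_num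

lemma cond_B2 : H4Cond B2 := by
  refine ⟨?_,?_,?_,?_,?_,?_,?_,?_,?_,?_,?_,?_,?_,?_,?_,?_,?_,?_,?_⟩ <;> simp only [B2, Matrix.of_apply, vec6_0, vec6_1, vec6_2, vec6_3, vec6_4, vec6_5] <;> norm_num

lemma cond_B3 : H4Cond B3 := by
  refine ⟨?_,?_,?_,?_,?_,?_,?_,?_,?_,?_,?_,?_,?_,?_,?_,?_,?_,?_,?_⟩ <;> simp only [B3, Matrix.of_apply, vec6_0, vec6_1, vec6_2, vec6_3, vec6_4, vec6_5] <;> norm_num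

lemma cond_B4 : H4Cond B4 := by
  refine ⟨?_,?_,?_,?_,?_,?_,?_,?_,?_,?_,?_,?_,?_,?_,?_,?_,?_,?_,?_⟩ <;> simp only [B4, Matrix.of_apply, vec6_0, vec6_1, vec6_2, vec6_3, vec6_4, vec6_5] <;> norm_num

lemma cond_B5 : H4Cond B5 := by
  refine ⟨?_,?_,?_,?_,?_,?_,?_,?_,?_,?_,?_,?_,?_,?_,?_,?_,?_,?_,?_⟩ <;> simp only [B5, Matrix.of_apply, vec6_0, vec6_1, vec6_2, vec6_3, vec6_4, vec6_5] <;> norm_num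

lemma cond_B6 : H4Cond B6 := by
  refine ⟨?_,?_,?_,?_,?_,?_,?_,?_,?_,?_,?_,?_,?_,?_,?_,?_,?_,?_,?_⟩ <;> simp only [B6, Matrix.of_apply, vec6_0, vec6_1, vec6_2, vec6_3, vec6_4, vec6_5] <;> norm_num

lemma cond_B7 : H4Cond B7 := by
  refine ⟨?_,?_,?_,?_,?_,?_,?_,?_,?_,?_,?_,?_,?_,?_,?_,?_,?_,?_,?_⟩ <;> simp only [B7, Matrix.of_apply, vec6_0, vec6_1, vec6_2, vec6_3, vec6_4, vec6_5] <;> norm_num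

lemma cond_B8 : H4Cond B8 := by
  refine ⟨?_,?_,?_,?_,?_,?_,?_,?_,?_,?_,?_,?_,?_,?_,?_,?_,?_,?_,?_⟩ <;> simp only [B8, Matrix.of_apply, vec6_0, vec6_1, vec6_2, vec6_3, vec6_4, vec6_5] <;> norm_num

lemma cond_B9 : H4Cond B9 := by
  refine ⟨?_,?_,?_,?_,?_,?_,?_,?_,?_,?_,?_,?_,?_,?_,?_,?_,?_,?_,?_⟩ <;> simp only [B9, Matrix.of_apply, vec6_0, vec6_1, vec6_2, vec6_3, vec6_4, vec6_5] <;> norm_num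

lemma cond_B10 : H4Cond B10 := by
  refine ⟨?_,?_,?_,?_,?_,?_,?_,?_,?_,?_,?_,?_,?_,?_,?_,?_,?_,?_,?_⟩ <;> simp only [B10, Matrix.of_apply, vec6_0, vec6_1, vec6_2, vec6_3, vec6_4, vec6_5] <;> norm_num

lemma cond_B11 : H4Cond B11 := by
  refine ⟨?_,?_,?_,?_,?_,?_,?_,?_,?_,?_,?_,?_,?_,?_,?_,?_,?_,?_,?_⟩ <;> simp only [B11, Matrix.of_apply, vec6_0, vec6_1, vec6_2, vec6_3, vec6_4, vec6_5] <;> norm_num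

lemma cond_B12 : H4Cond B12 := by
  refine ⟨?_,?_,?_,?_,?_,?_,?_,?_,?_,?_,?_,?_,?_,?_,?_,?_,?_,?_,?_⟩ <;> simp only [B12, Matrix.of_apply, vec6_0, vec6_1, vec6_2, vec6_3, vec6_4, vec6_5] <;> norm_num

lemma cond_B13 : H4Cond B13 := by
  refine ⟨?_,?_,?_,?_,?_,?_,?_,?_,?_,?_,?_,?_,?_,?_,?_,?_,?_,?_,?_⟩ <;> simp only [B13, Matrix.of_apply, vec6_0, vec6_1, vec6_2, vec6_3, vec6_4, vec6_5] <;> norm_num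

lemma cond_B14 : H4Cond B14 := by
  refine ⟨?_,?_,?_,?_,?_,?_,?_,?_,?_,?_,?_,?_,?_,?_,?_,?_,?_,?_,?_⟩ <;> simp only [B14, Matrix.of_apply, vec6_0, vec6_1, vec6_2, vec6_3, vec6_4, vec6_5] <;> norm_num

lemma cond_B15 : H4Cond B15 := by
  refine ⟨?_,?_,?_,?_,?_,?_,?_,?_,?_,?_,?_,?_,?_,?_,?_,?_,?_,?_,?_⟩ <;> simp only [B15, Matrix.of_apply, vec6_0, vec6_1, vec6_2, vec6_3, vec6_4, vec6_5] <;> norm_num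

lemma cond_B16 : H4Cond B16 := by
  refine ⟨?_,?_,?_,?_,?_,?_,?_,?_,?_,?_,?_,?_,?_,?_,?_,?_,?_,?_,?_⟩ <;> simp only [B16, Matrix.of_apply, vec6_0, vec6_1, vec6_2, vec6_3, vec6_4, vec6_5] <;> norm_num

lemma basis_cond (i : Fin 17) : H4Cond (h4basis i) := by
  fin_cases i
  exacts [cond_B0, cond_B1, cond_B2, cond_B3, cond_B4, cond_B5, cond_B6, cond_B7, cond_B8,
    cond_B9, cond_B10, cond_B11, cond_B12, cond_B13, cond_B14, cond_B15, cond_B16]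

lemma cond_imp_span {D : Matrix (Fin 6) (Fin 6) ℝ} (h : H4Cond D) :
    D ∈ Submodule.span ℝ (Set.range h4basis) := by
  obtain ⟨h02, h03, h04, h05, h12, h13, h14, h15, h24, h25, h34, h35, h45, h23, h32, h33, h44, h54, h55⟩ := h
  have h33' : D 3 3 = -D 0 0 + D 1 1 + D 2 2 := by linarith
  have h54' : D 5 4 = -D 2 0 + D 3 1 := by linarith
  have hDeq : D = !![D 0 0, D 0 1, 0, 0, 0, 0;
        D 1 0, D 1 1, 0, 0, 0, 0;
        D 2 0, D 2 1, D 2 2, -D 0 1, 0, 0;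
        D 3 0, D 3 1, -D 1 0, -D 0 0 + D 1 1 + D 2 2, 0, 0;
        D 4 0, D 4 1, D 4 2, D 4 3, D 0 0 + D 1 1, 0;
        D 5 0, D 5 1, D 5 2, D 5 3, -D 2 0 + D 3 1, D 1 1 + D 2 2] := by
    conv_lhs => rw [← Matrix.etaExpand_eq D]
    show !![D 0 0, D 0 1, D 0 2, D 0 3, D 0 4, D 0 5;
        D 1 0, D 1 1, D 1 2, D 1 3, D 1 4, D 1 5;
        D 2 0, D 2 1, D 2 2, D 2 3, D 2 4, D 2 5;
        D 3 0, D 3 1, D 3 2, D 3 3, D 3 4, D 3 5;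
        D 4 0, D 4 1, D 4 2, D 4 3, D 4 4, D 4 5;
        D 5 0, D 5 1, D 5 2, D 5 3, D 5 4, D 5 5] = _
    rw [h02, h03, h04, h05, h12, h13, h14, h15, h24, h25, h34, h35, h45, h23, h32, h33', h44, h54', h55]
  have hcombo : (D 0 0 • h4basis 0 + D 0 1 • h4basis 1 + D 1 0 • h4basis 2 + D 1 1 • h4basis 3 + D 2 0 • h4basis 4 + D 2 1 • h4basis 5 + D 2 2 • h4basis 6 + D 3 0 • h4basis 7 + D 3 1 • h4basis 8 + D 4 0 • h4basis 9 + D 4 1 • h4basis 10 + D 4 2 • h4basis 11 + D 4 3 • h4basis 12 + D 5 0 • h4basis 13 + D 5 1 • h4basis 14 + D 5 2 • h4basis 15 + D 5 3 • h4basis 16 : Matrix (Fin 6) (Fin 6) ℝ) = !![D 0 0, D 0 1, 0, 0, 0, 0;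
        D 1 0, D 1 1, 0, 0, 0, 0;
        D 2 0, D 2 1, D 2 2, -D 0 1, 0, 0;
        D 3 0, D 3 1, -D 1 0, -D 0 0 + D 1 1 + D 2 2, 0, 0;
        D 4 0, D 4 1, D 4 2, D 4 3, D 0 0 + D 1 1, 0;
        D 5 0, D 5 1, D 5 2, D 5 3, -D 2 0 + D 3 1, D 1 1 + D 2 2] := by
    show (D 0 0 • B0 + D 0 1 • B1 + D 1 0 • B2 + D 1 1 • B3 + D 2 0 • B4 + D 2 1 • B5 +
      D 2 2 • B6 + D 3 0 • B7 + D 3 1 • B8 + D 4 0 • B9 + D 4 1 • B10 + D 4 2 • B11 +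
      D 4 3 • B12 + D 5 0 • B13 + D 5 1 • B14 + D 5 2 • B15 + D 5 3 • B16 : Matrix (Fin 6) (Fin 6) ℝ) = _
    norm_num [B0, B1, B2, B3, B4, B5, B6, B7, B8, B9, B10, B11, B12, B13, B14, B15, B16,
      Matrix.smul_of, Matrix.smul_cons, Matrix.smul_empty, Matrix.of_add_of,
      Matrix.cons_add_cons, Matrix.empty_add_empty]
  have hDeq2 : D = D 0 0 • h4basis 0 + D 0 1 • h4basis 1 + D 1 0 • h4basis 2 + D 1 1 • h4basis 3 + D 2 0 • h4basis 4 + D 2 1 • h4basis 5 + D 2 2 • h4basis 6 + D 3 0 • h4basis 7 + D 3 1 • h4basis 8 + D 4 0 • h4basis 9 + D 4 1 • h4basis 10 + D 4 2 • h4basis 11 + D 4 3 • h4basis 12 + D 5 0 • h4basis 13 + D 5 1 • h4basis 14 + D 5 2 • h4basis 15 + D 5 3 • h4basis 16 := hDeq.trans hcombo.symm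
  rw [hDeq2]
  have hb : ∀ i : Fin 17, h4basis i ∈ Submodule.span ℝ (Set.range h4basis) :=
    fun i => Submodule.subset_span ⟨i, rfl⟩
  exact Submodule.add_mem _ (Submodule.add_mem _ (Submodule.add_mem _ (Submodule.add_mem _
    (Submodule.add_mem _ (Submodule.add_mem _ (Submodule.add_mem _ (Submodule.add_mem _
    (Submodule.add_mem _ (Submodule.add_mem _ (Submodule.add_mem _ (Submodule.add_mem _
    (Submodule.add_mem _ (Submodule.add_mem _ (Submodule.add_mem _ (Submodule.add_mem _
    (Submodule.smul_mem _ _ (hb 0)) (Submodule.smul_mem _ _ (hb 1))) (Submodule.smul_mem _ _ (hb 2)))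
    (Submodule.smul_mem _ _ (hb 3))) (Submodule.smul_mem _ _ (hb 4))) (Submodule.smul_mem _ _ (hb 5)))
    (Submodule.smul_mem _ _ (hb 6))) (Submodule.smul_mem _ _ (hb 7))) (Submodule.smul_mem _ _ (hb 8)))
    (Submodule.smul_mem _ _ (hb 9))) (Submodule.smul_mem _ _ (hb 10))) (Submodule.smul_mem _ _ (hb 11)))
    (Submodule.smul_mem _ _ (hb 12))) (Submodule.smul_mem _ _ (hb 13))) (Submodule.smul_mem _ _ (hb 14)))
    (Submodule.smul_mem _ _ (hb 15))) (Submodule.smul_mem _ _ (hb 16))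

lemma span_imp_deriv {D : Matrix (Fin 6) (Fin 6) ℝ}
    (h : D ∈ Submodule.span ℝ (Set.range h4basis)) : IsDerivH4 D := by
  induction h using Submodule.span_induction with
  | mem x hx => obtain ⟨i, rfl⟩ := hx; exact cond_imp_deriv (basis_cond i)
  | zero => exact isDerivH4_zero
  | add x y _ _ hx hy => exact isDerivH4_add hx hy
  | smul c x _ hx => exact isDerivH4_smul c hx

lemma h4basis_li : LinearIndependent ℝ h4basis := by
  rw [Fintype.linearIndependent_iff]
  intro g hg i
  have p0 := congrFun (congrFun hg 0) 0
  have p1 := congrFun (congrFun hg 0) 1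
  have p2 := congrFun (congrFun hg 1) 0
  have p3 := congrFun (congrFun hg 1) 1
  have p4 := congrFun (congrFun hg 2) 0
  have p5 := congrFun (congrFun hg 2) 1
  have p6 := congrFun (congrFun hg 2) 2
  have p7 := congrFun (congrFun hg 3) 0
  have p8 := congrFun (congrFun hg 3) 1
  have p9 := congrFun (congrFun hg 4) 0
  have p10 := congrFun (congrFun hg 4) 1
  have p11 := congrFun (congrFun hg 4) 2
  have p12 := congrFun (congrFun hg 4) 3
  have p13 := congrFun (congrFun hg 5) 0
  have p14 := congrFun (congrFun hg 5) 1
  have p15 := congrFun (congrFun hg 5) 2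
  have p16 := congrFun (congrFun hg 5) 3
  simp only [h4basis, Matrix.sum_apply, Fin.sum_univ_succ, Fin.sum_univ_zero, Matrix.cons_val_zero, Matrix.cons_val_succ, Matrix.smul_apply, smul_eq_mul, Matrix.zero_apply, Matrix.of_apply, vec6_0, vec6_1, vec6_2, vec6_3, vec6_4, vec6_5, mul_zero, mul_one, add_zero, zero_add, mul_neg, B0, B1, B2, B3, B4, B5, B6, B7, B8, B9, B10, B11, B12, B13, B14, B15, B16] at p0 p1 p2 p3 p4 p5 p6 p7 p8 p9 p10 p11 p12 p13 p14 p15 p16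
  norm_num at p0 p1 p2 p3 p4 p5 p6 p7 p8 p9 p10 p11 p12 p13 p14 p15 p16
  fin_cases i
  exacts [p0, p1, p2, p3, p4, p5, p6, p7, p8, p9, p10, p11, p12, p13, p14, p15, p16]

/-- Lemma 6.2: characterization of the derivations of 𝔥₄ by linear conditions on the
matrix entries, and the space of derivations of 𝔥₄ has dimension 17 (it is the span
of 17 linearly independent matrices). -/
theorem deriv_h4_characterization_and_dim :
    (∀ D : Matrix (Fin 6) (Fin 6) ℝ, IsDerivH4 D ↔
      ((∀ j : Fin 6, 2 ≤ (j : ℕ) → D 0 j = 0 ∧ D 1 j = 0) ∧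
        D 2 4 = 0 ∧ D 2 5 = 0 ∧ D 3 4 = 0 ∧ D 3 5 = 0 ∧ D 4 5 = 0 ∧
        D 2 3 = -(D 0 1) ∧ D 3 2 = -(D 1 0) ∧
        D 3 3 - D 2 2 = D 1 1 - D 0 0 ∧
        D 4 4 = D 0 0 + D 1 1 ∧
        D 5 4 = D 3 1 - D 2 0 ∧
        D 5 5 = D 1 1 + D 2 2)) ∧
    ∃ b : Fin 17 → Matrix (Fin 6) (Fin 6) ℝ,
      LinearIndependent ℝ b ∧
      ∀ D : Matrix (Fin 6) (Fin 6) ℝ,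
        IsDerivH4 D ↔ D ∈ Submodule.span ℝ (Set.range b) := by
  constructor
  · intro D
    constructor
    · intro hD
      obtain ⟨h02, h03, h04, h05, h12, h13, h14, h15, h24, h25, h34, h35, h45, h23, h32, h33, h44, h54, h55⟩ := deriv_imp_cond hD
      refine ⟨?_, h24, h25, h34, h35, h45, h23, h32, h33, h44, h54, h55⟩
      intro j hj
      fin_cases j <;> simp_all
    · rintro ⟨hrow, h24, h25, h34, h35, h45, h23, h32, h33, h44, h54, h55⟩
      exact cond_imp_deriv ⟨(hrow 2 (by decide)).1, (hrow 3 (by decide)).1,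
        (hrow 4 (by decide)).1, (hrow 5 (by decide)).1,
        (hrow 2 (by decide)).2, (hrow 3 (by decide)).2,
        (hrow 4 (by decide)).2, (hrow 5 (by decide)).2,
        h24, h25, h34, h35, h45, h23, h32, h33, h44, h54, h55⟩
  · exact ⟨h4basis, h4basis_li,
      fun D => ⟨fun h => cond_imp_span (deriv_imp_cond h), span_imp_deriv⟩⟩
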